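/- Let p(u,v) = v³u + v²u² + vu³ − v² − 3vu − u² + 2v + 2u − 1 and let Z = { (a,b) ∈ ℂ² : a ∉ {0,1}, b ∉ {0,1}, p(a,b) = 0 }. Then the function τ(a,b) = a/(1 − b) + b/(1 − a) is not constant on Z: there exist points (a,b) and (c,d) in Z with τ(a,b) ≠ τ(c,d). -/

import Mathlib

/-- The defining polynomial of the curve `V₀` of deformations of the `6²₂` link complement
along which the first cusp stays complete. -/
noncomputable def sixTwoTwoPoly (u v : ℂ) : ℂ :=
  v ^ 3 * u + v ^ 2 * u ^ 2 + v * u ^ 3 - v ^ 2 - 3 * v * u - u ^ 2 + 2 * v + 2 * u - 1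

/-- The cusp parameter function of the first cusp of the `6²₂` link complement on `V₀`. -/
noncomputable def sixTwoTwoTau (a b : ℂ) : ℂ := a / (1 - b) + b / (1 - a)

/-!
Both `p` and `τ` are symmetric, so they are functions of `s = a + b` and `P = ab`:
`p = (P - 1) s² + 2 s - (P² + P + 1)` and `τ = (s - s² + 2P) / (1 - s + P)`, where
`1 - s + P = (1 - a)(1 - b)`. On the line `P = 4` the curve becomes `(3s - 7)(s + 3) = 0`,
and the two values `s = -3`, `s = 7/3` give `τ = -1/2` and `τ = 11/6`. Every pair `(s, P)`
is realised by some `(a, b) ∈ ℂ²`, namely the roots of `X² - sX + P`.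
-/

open Polynomial in
theorem exists_add_eq_and_mul_eq {K : Type*} [Field K] [IsAlgClosed K] (s p : K) :
    ∃ a b : K, a + b = s ∧ a * b = p := by
  have hdeg : (X ^ 2 - C s * X + C p).degree = 2 := by compute_degree!
  obtain ⟨a, ha⟩ := IsAlgClosed.exists_root _ (hdeg ▸ two_ne_zero)
  refine ⟨a, s - a, add_sub_cancel a s, ?_⟩
  simp only [IsRoot, eval_add, eval_sub, eval_mul, eval_pow, eval_C, eval_X] at ha
  linear_combination -ha

theorem ne_zero_ne_one_of_mul_ne_zero {R : Type*} [CommRing R] [NoZeroDivisors R] {a b : R}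
    (hab : a * b ≠ 0) (h : 1 - (a + b) + a * b ≠ 0) : a ≠ 0 ∧ a ≠ 1 ∧ b ≠ 0 ∧ b ≠ 1 := by
  rw [show 1 - (a + b) + a * b = (1 - a) * (1 - b) by ring] at h
  obtain ⟨ha, hb⟩ := mul_ne_zero_iff.1 hab
  obtain ⟨ha', hb'⟩ := mul_ne_zero_iff.1 h
  exact ⟨ha, (sub_ne_zero.1 ha').symm, hb, (sub_ne_zero.1 hb').symm⟩

theorem sixTwoTwoPoly_eq (a b : ℂ) :
    sixTwoTwoPoly a b = (a * b - 1) * (a + b) ^ 2 + 2 * (a + b) - ((a * b) ^ 2 + a * b + 1) := by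
  unfold sixTwoTwoPoly
  ring

theorem sixTwoTwoTau_eq {a b : ℂ} (ha : a ≠ 1) (hb : b ≠ 1) :
    sixTwoTwoTau a b = (a + b - (a + b) ^ 2 + 2 * (a * b)) / (1 - (a + b) + a * b) := by
  rw [sixTwoTwoTau, div_add_div _ _ (sub_ne_zero.2 hb.symm) (sub_ne_zero.2 ha.symm)]
  congr 1 <;> ring

theorem sixTwoTwo_locus_of_mul_eq_four {a b : ℂ} (hp : a * b = 4)
    (hs : a + b = -3 ∨ a + b = 7 / 3) :
    a ≠ 0 ∧ a ≠ 1 ∧ b ≠ 0 ∧ b ≠ 1 ∧ sixTwoTwoPoly a b = 0 := by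
  have hdenom : 1 - (a + b) + a * b ≠ 0 := by
    rcases hs with hs | hs <;> rw [hs, hp] <;> norm_num
  obtain ⟨ha₀, ha₁, hb₀, hb₁⟩ := ne_zero_ne_one_of_mul_ne_zero (by simp [hp]) hdenom
  refine ⟨ha₀, ha₁, hb₀, hb₁, ?_⟩
  rw [sixTwoTwoPoly_eq, hp]
  rcases hs with hs | hs <;> rw [hs] <;> norm_num

/-- The cusp parameter function `τ(a,b) = a/(1−b) + b/(1−a)` is non-constant on the zero
locus `Z` of `p(u,v) = v³u + v²u² + vu³ − v² − 3vu − u² + 2v + 2u − 1` (with coordinates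
avoiding `0` and `1`). -/
theorem six_two_two_cusp_parameter_nonconstant :
    ∃ x y : ℂ × ℂ,
      x ∈ {q : ℂ × ℂ | q.1 ≠ 0 ∧ q.1 ≠ 1 ∧ q.2 ≠ 0 ∧ q.2 ≠ 1 ∧ sixTwoTwoPoly q.1 q.2 = 0} ∧
      y ∈ {q : ℂ × ℂ | q.1 ≠ 0 ∧ q.1 ≠ 1 ∧ q.2 ≠ 0 ∧ q.2 ≠ 1 ∧ sixTwoTwoPoly q.1 q.2 = 0} ∧
      sixTwoTwoTau x.1 x.2 ≠ sixTwoTwoTau y.1 y.2 := by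
  obtain ⟨a, b, hab, hab'⟩ := exists_add_eq_and_mul_eq (-3 : ℂ) 4
  obtain ⟨c, d, hcd, hcd'⟩ := exists_add_eq_and_mul_eq (7 / 3 : ℂ) 4
  have hx := sixTwoTwo_locus_of_mul_eq_four hab' (.inl hab)
  have hy := sixTwoTwo_locus_of_mul_eq_four hcd' (.inr hcd)
  refine ⟨(a, b), (c, d), hx, hy, ?_⟩
  dsimp only
  rw [sixTwoTwoTau_eq hx.2.1 hx.2.2.2.1, sixTwoTwoTau_eq hy.2.1 hy.2.2.2.1,
    hab, hab', hcd, hcd']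
  norm_num
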